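/- arXiv:1303.0149 — 7 statements merged into one kernel-verified Lean document; each statement's English description precedes it below -/
import Mathlib

section
/- Let p ≥ 0 and q ≥ 1 be integers and n = p+q+2. For every row vector u ∈ ℂ^p, every row vector v ∈ ℂ^q and every w ∈ ℂ with conj(w) = -w, the matrix N_{u,v,w} satisfies N_{u,v,w}^3 = 0. -/
/-- The matrix `N_{u,v,w}` over `ℂ`, written in block form with row/column blocks of
sizes `1, p, q, 1` (the index type `Fin 1 ⊕ Fin p ⊕ Fin q ⊕ Fin 1` has `p + q + 2` elements):
`N = [[-w, u, v, w], [-u*, 0, 0, u*], [v*, 0, 0, -v*], [-w, u, v, w]]`. -/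
def Nmat {p q : ℕ} (u : Fin p → ℂ) (v : Fin q → ℂ) (w : ℂ) :
    Matrix (Fin 1 ⊕ Fin p ⊕ Fin q ⊕ Fin 1) (Fin 1 ⊕ Fin p ⊕ Fin q ⊕ Fin 1) ℂ :=
  fun i j =>
    match i, j with
    | Sum.inl _, Sum.inl _ => -w
    | Sum.inl _, Sum.inr (Sum.inl j) => u j
    | Sum.inl _, Sum.inr (Sum.inr (Sum.inl j)) => v j
    | Sum.inl _, Sum.inr (Sum.inr (Sum.inr _)) => w
    | Sum.inr (Sum.inl i), Sum.inl _ => -(starRingEnd ℂ) (u i)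
    | Sum.inr (Sum.inl i), Sum.inr (Sum.inr (Sum.inr _)) => (starRingEnd ℂ) (u i)
    | Sum.inr (Sum.inl _), _ => 0
    | Sum.inr (Sum.inr (Sum.inl i)), Sum.inl _ => (starRingEnd ℂ) (v i)
    | Sum.inr (Sum.inr (Sum.inl i)), Sum.inr (Sum.inr (Sum.inr _)) => -(starRingEnd ℂ) (v i)
    | Sum.inr (Sum.inr (Sum.inl _)), _ => 0
    | Sum.inr (Sum.inr (Sum.inr _)), Sum.inl _ => -w
    | Sum.inr (Sum.inr (Sum.inr _)), Sum.inr (Sum.inl j) => u j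
    | Sum.inr (Sum.inr (Sum.inr _)), Sum.inr (Sum.inr (Sum.inl j)) => v j
    | Sum.inr (Sum.inr (Sum.inr _)), Sum.inr (Sum.inr (Sum.inr _)) => w


open Matrix in
private lemma vmv_mul_vmv {m : Type*} [Fintype m] (a b c d : m → ℂ) :
    vecMulVec a b * vecMulVec c d = (b ⬝ᵥ c) • vecMulVec a d := by
  ext i j
  simp only [Matrix.mul_apply, vecMulVec_apply, Matrix.smul_apply, dotProduct, smul_eq_mul,
    Finset.sum_mul]
  exact Finset.sum_congr rfl fun k _ => by ring

private def eVec (p q : ℕ) : Fin 1 ⊕ Fin p ⊕ Fin q ⊕ Fin 1 → ℂ :=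
  Sum.elim (fun _ => 1) (Sum.elim (fun _ => 0) (Sum.elim (fun _ => 0) (fun _ => 1)))

private def rVec {p q : ℕ} (u : Fin p → ℂ) (v : Fin q → ℂ) (w : ℂ) :
    Fin 1 ⊕ Fin p ⊕ Fin q ⊕ Fin 1 → ℂ :=
  Sum.elim (fun _ => -w) (Sum.elim u (Sum.elim v (fun _ => w)))

private def fVec {p q : ℕ} (u : Fin p → ℂ) (v : Fin q → ℂ) :
    Fin 1 ⊕ Fin p ⊕ Fin q ⊕ Fin 1 → ℂ :=
  Sum.elim (fun _ => 0) (Sum.elim (fun i => (starRingEnd ℂ) (u i))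
    (Sum.elim (fun i => -(starRingEnd ℂ) (v i)) (fun _ => 0)))

private def sVec (p q : ℕ) : Fin 1 ⊕ Fin p ⊕ Fin q ⊕ Fin 1 → ℂ :=
  Sum.elim (fun _ => -1) (Sum.elim (fun _ => 0) (Sum.elim (fun _ => 0) (fun _ => 1)))

/-- For every row vector `u ∈ ℂ^p`, row vector `v ∈ ℂ^q` and `w ∈ ℂ` with `conj w = -w`,
the matrix `N_{u,v,w}` satisfies `N_{u,v,w}^3 = 0`. -/
theorem Nmat_cube_eq_zero (p q : ℕ) (hp : 0 ≤ p) (hq : 1 ≤ q)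
    (u : Fin p → ℂ) (v : Fin q → ℂ) (w : ℂ) (hw : starRingEnd ℂ w = -w) :
    Nmat u v w ^ 3 = 0 := by
  open Matrix in
  have hN : Nmat u v w = vecMulVec (eVec p q) (rVec u v w) + vecMulVec (fVec u v) (sVec p q) := by
    ext i j
    rcases i with i | i | i | i <;> rcases j with j | j | j | j <;>
      simp [Nmat, Matrix.vecMulVec_apply, eVec, rVec, fVec, sVec]
  have hre : rVec u v w ⬝ᵥ eVec p q = 0 := by
    simp [dotProduct, Fintype.sum_sum_type, rVec, eVec]
  have hse : sVec p q ⬝ᵥ eVec p q = 0 := by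
    simp [dotProduct, Fintype.sum_sum_type, sVec, eVec]
  have hsf : sVec p q ⬝ᵥ fVec u v = 0 := by
    simp [dotProduct, Fintype.sum_sum_type, sVec, fVec]
  have h2 : Nmat u v w * Nmat u v w
      = (rVec u v w ⬝ᵥ fVec u v) • Matrix.vecMulVec (eVec p q) (sVec p q) := by
    rw [hN, add_mul, mul_add, mul_add, vmv_mul_vmv, vmv_mul_vmv, vmv_mul_vmv, vmv_mul_vmv,
      hre, hse, hsf]
    simp
  have h3 : Nmat u v w * (Nmat u v w * Nmat u v w) = 0 := by
    rw [h2, hN, Matrix.mul_smul, add_mul, vmv_mul_vmv, vmv_mul_vmv, hre, hse]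
    simp
  rw [pow_succ, pow_two, mul_assoc, h3]
end

section
/- Let p ≥ 0 and q ≥ 1 be integers and n = p+q+2. For every row vector u ∈ ℂ^p, every row vector v ∈ ℂ^q and every w ∈ ℂ with conj(w) = -w, the matrix exponential of N_{u,v,w} is exp(N_{u,v,w}) = I + N_{u,v,w} + (1/2) N_{u,v,w}^2, where I is the n×n identity matrix. -/
/-!
The first and last rows of `N` coincide and its last column is minus its first, so `N` is a sum
of two rank-one matrices `e rᵀ + c fᵀ` with `e = e₁ + eₙ` and `f = e₁ - eₙ`. Since
`r ⬝ e = f ⬝ e = f ⬝ c = 0`, one gets `N² = (r ⬝ c) e fᵀ` and `N³ = 0`, so the exponential series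
of `N` stops after its quadratic term.
-/

open Matrix

theorem NormedSpace.exp_eq_sum_range_of_pow_eq_zero {𝕂 𝔸 : Type*} [Field 𝕂] [CharZero 𝕂]
    [Ring 𝔸] [Algebra 𝕂 𝔸] [TopologicalSpace 𝔸] [IsTopologicalRing 𝔸] {x : 𝔸} {k : ℕ}
    (hx : x ^ k = 0) :
    NormedSpace.exp x = ∑ n ∈ Finset.range k, (n.factorial⁻¹ : 𝕂) • x ^ n := by
  rw [NormedSpace.exp_eq_tsum 𝕂]
  refine tsum_eq_sum fun n hn => ?_
  rw [← Nat.sub_add_cancel (not_lt.1 (Finset.mem_range.not.1 hn)), pow_add, hx, mul_zero,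
    smul_zero]

theorem Matrix.vecMulVec_add_vecMulVec_pow_three_eq_zero {ι R : Type*} [Fintype ι]
    [DecidableEq ι] [CommRing R] {a b c d : ι → R} (hba : b ⬝ᵥ a = 0) (hda : d ⬝ᵥ a = 0)
    (hdc : d ⬝ᵥ c = 0) :
    (vecMulVec a b + vecMulVec c d) ^ 3 = 0 := by
  have hsq : (vecMulVec a b + vecMulVec c d) ^ 2 = vecMulVec a ((b ⬝ᵥ c) • d) := by
    simp [sq, add_mul, mul_add, vecMulVec_mul_vecMulVec, hba, hda, hdc]
  rw [pow_succ, hsq]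
  simp [mul_add, vecMulVec_mul_vecMulVec, hda, hdc]

theorem Nmat_eq_vecMulVec_add_vecMulVec {p q : ℕ} (u : Fin p → ℂ) (v : Fin q → ℂ) (w : ℂ) :
    Nmat u v w =
      vecMulVec (Sum.elim 1 (Sum.elim 0 (Sum.elim 0 1)))
          (Sum.elim (fun _ => -w) (Sum.elim u (Sum.elim v fun _ => w))) +
        vecMulVec (Sum.elim 0 (Sum.elim (-star u) (Sum.elim (star v) 0)))
          (Sum.elim 1 (Sum.elim 0 (Sum.elim 0 (-1)))) := by
  ext (_ | i | i | _) (_ | j | j | _) <;> simp [Nmat, vecMulVec_apply]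

theorem Nmat_pow_three_eq_zero {p q : ℕ} (u : Fin p → ℂ) (v : Fin q → ℂ) (w : ℂ) :
    Nmat u v w ^ 3 = 0 := by
  rw [Nmat_eq_vecMulVec_add_vecMulVec]
  exact vecMulVec_add_vecMulVec_pow_three_eq_zero (by simp [dotProduct]) (by simp) (by simp)

theorem exp_Nmat_general (p q : ℕ)
    (u : Fin p → ℂ) (v : Fin q → ℂ) (w : ℂ) :
    NormedSpace.exp (Nmat u v w) = 1 + Nmat u v w + (1 / 2 : ℂ) • Nmat u v w ^ 2 := by
  rw [NormedSpace.exp_eq_sum_range_of_pow_eq_zero (𝕂 := ℂ) (Nmat_pow_three_eq_zero u v w)]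
  simp [Finset.sum_range_succ]

/-- For every row vector `u ∈ ℂ^p`, row vector `v ∈ ℂ^q` and `w ∈ ℂ` with `conj w = -w`,
the matrix exponential of `N_{u,v,w}` equals `I + N + (1/2) N²`. -/
theorem exp_Nmat (p q : ℕ) (hp : 0 ≤ p) (hq : 1 ≤ q)
    (u : Fin p → ℂ) (v : Fin q → ℂ) (w : ℂ) (hw : starRingEnd ℂ w = -w) :
    NormedSpace.exp (Nmat u v w) = 1 + Nmat u v w + (1 / 2 : ℂ) • Nmat u v w ^ 2 :=
  exp_Nmat_general p q u v w
end

section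
/- Let Ω = {(t₁,t₂,t₃) ∈ ℝ³ : t₂² + t₃² > t₁²}, let k ≥ 1 be an odd integer, and let G : Ω → ℂ be k times continuously differentiable, even in t₂ (i.e., G(t₁,-t₂,t₃) = G(t₁,t₂,t₃)) and satisfying G(-t₁,t₂,-t₃) = G(t₁,t₂,t₃). Then for every α ∈ ℝ, the function v ↦ (∂/∂z)^k |_{z=0} [ G(t(z,v)) · S(z,v)^α ] is an odd function of v ∈ ℝ. -/
/-- Let `Ω = {(t₁,t₂,t₃) : t₂² + t₃² > t₁²}`, `k ≥ 1` odd, and `G : Ω → ℂ` be `Cᵏ`,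
even in `t₂` and satisfying `G(-t₁,t₂,-t₃) = G(t₁,t₂,t₃)`.  Then for every `α ∈ ℝ` the
function `v ↦ (∂/∂z)^k |_{z=0} [G(t(z,v))·S(z,v)^α]`, where `S(z,v) = 1 + 2zv - z²` and
`t(z,v) = (-v, -√S, z-v)`, is an odd function of `v`. -/
theorem kth_deriv_odd_in_v (k : ℕ) (hk : Odd k) (α : ℝ) (G : ℝ × ℝ × ℝ → ℂ)
    (hG : ContDiffOn ℝ (k : ℕ∞) G {t : ℝ × ℝ × ℝ | t.1 ^ 2 < t.2.1 ^ 2 + t.2.2 ^ 2})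
    (heven : ∀ t : ℝ × ℝ × ℝ, t.1 ^ 2 < t.2.1 ^ 2 + t.2.2 ^ 2 →
      G (t.1, -t.2.1, t.2.2) = G t)
    (hsym : ∀ t : ℝ × ℝ × ℝ, t.1 ^ 2 < t.2.1 ^ 2 + t.2.2 ^ 2 →
      G (-t.1, t.2.1, -t.2.2) = G t) :
    ∀ v : ℝ,
      iteratedDeriv k
          (fun z : ℝ =>
            G (-(-v), -Real.sqrt (1 + 2 * z * (-v) - z ^ 2), z - (-v)) *
              (((1 + 2 * z * (-v) - z ^ 2) ^ α : ℝ) : ℂ)) 0 =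
        -iteratedDeriv k
          (fun z : ℝ =>
            G (-v, -Real.sqrt (1 + 2 * z * v - z ^ 2), z - v) *
              (((1 + 2 * z * v - z ^ 2) ^ α : ℝ) : ℂ)) 0 := by
  intro v
  set f : ℝ → ℂ := fun z : ℝ =>
    G (-v, -Real.sqrt (1 + 2 * z * v - z ^ 2), z - v) *
      (((1 + 2 * z * v - z ^ 2) ^ α : ℝ) : ℂ) with hf
  have hcont : Continuous fun z : ℝ => 1 - 2 * z * v - z ^ 2 := by continuity
  have hnhds : ∀ᶠ z in nhds (0 : ℝ), 0 < 1 - 2 * z * v - z ^ 2 := by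
    have h0 : (0 : ℝ) < 1 - 2 * 0 * v - 0 ^ 2 := by norm_num
    have := (hcont.continuousAt (x := 0)).eventually (p := fun y => 0 < y)
      (eventually_gt_nhds (by norm_num))
    simpa using this
  have key : (fun z : ℝ =>
      G (-(-v), -Real.sqrt (1 + 2 * z * (-v) - z ^ 2), z - (-v)) *
        (((1 + 2 * z * (-v) - z ^ 2) ^ α : ℝ) : ℂ)) =ᶠ[nhds (0 : ℝ)]
      (fun z : ℝ => f (-z)) := by
    filter_upwards [hnhds] with z hz
    have hS : (1 : ℝ) + 2 * z * (-v) - z ^ 2 = 1 + 2 * (-z) * v - (-z) ^ 2 := by ring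
    have hmem : (v : ℝ) ^ 2 <
        (-Real.sqrt (1 + 2 * z * (-v) - z ^ 2)) ^ 2 + (z + v) ^ 2 := by
      rw [neg_pow, Real.sq_sqrt (by nlinarith : (0:ℝ) ≤ 1 + 2 * z * (-v) - z ^ 2)]
      nlinarith
    have := hsym (v, -Real.sqrt (1 + 2 * z * (-v) - z ^ 2), z + v) hmem
    simp only [hf]
    rw [show z - (-v) = z + v by ring, show -(-v) = v by ring, ← this]
    rw [hS]
    ring_nf
  rw [key.iteratedDeriv_eq, iteratedDeriv_comp_neg, neg_zero, hk.neg_one_pow]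
  simp
end

section
/- Let Ω = {(t₁,t₂,t₃) ∈ ℝ³ : t₂² + t₃² > t₁²}, let j ≥ 1 be an odd integer, α ∈ ℝ, and let G : Ω → ℂ be j times continuously differentiable, even in t₂ (G(t₁,-t₂,t₃) = G(t₁,t₂,t₃)) and satisfying G(-t₁,t₂,-t₃) = G(t₁,t₂,t₃). If the function v ↦ (∂/∂z)^j |_{z=0} [ G(t(z,v)) · S(z,v)^α ] is Lebesgue integrable on ℝ, then its integral over ℝ vanishes: ∫_ℝ (∂/∂z)^j |_{z=0} [ G(t(z,v)) S(z,v)^α ] dv = 0. -/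
open MeasureTheory

/-- Iterated derivatives at a point only depend on the germ of the function. -/
lemma iteratedDeriv_congr_nhds {f g : ℝ → ℂ} {x : ℝ} (h : f =ᶠ[nhds x] g) (n : ℕ) :
    iteratedDeriv n f x = iteratedDeriv n g x := by
  rw [← iteratedDerivWithin_univ, ← iteratedDerivWithin_univ]
  unfold iteratedDerivWithin
  rw [Filter.EventuallyEq.iteratedFDerivWithin_eq (𝕜 := ℝ)
    (h.filter_mono nhdsWithin_le_nhds) h.eq_of_nhds n]

/-- Let `Ω = {(t₁,t₂,t₃) : t₂² + t₃² > t₁²}`, `j ≥ 1` odd, `α ∈ ℝ`, and `G : Ω → ℂ` a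
`Cʲ` function, even in `t₂` and satisfying `G(-t₁,t₂,-t₃) = G(t₁,t₂,t₃)`.  If the
function `v ↦ (∂/∂z)^j |_{z=0} [G(t(z,v))·S(z,v)^α]` (with `S(z,v) = 1 + 2zv - z²` and
`t(z,v) = (-v, -√S, z-v)`) is Lebesgue integrable on `ℝ`, then its integral over `ℝ`
vanishes. -/
theorem integral_odd_coefficient_vanishes (j : ℕ) (hj : Odd j) (α : ℝ) (G : ℝ × ℝ × ℝ → ℂ)
    (hG : ContDiffOn ℝ (j : ℕ∞) G {t : ℝ × ℝ × ℝ | t.1 ^ 2 < t.2.1 ^ 2 + t.2.2 ^ 2})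
    (heven : ∀ t : ℝ × ℝ × ℝ, t.1 ^ 2 < t.2.1 ^ 2 + t.2.2 ^ 2 →
      G (t.1, -t.2.1, t.2.2) = G t)
    (hsym : ∀ t : ℝ × ℝ × ℝ, t.1 ^ 2 < t.2.1 ^ 2 + t.2.2 ^ 2 →
      G (-t.1, t.2.1, -t.2.2) = G t)
    (hint : Integrable (fun v : ℝ =>
      iteratedDeriv j
        (fun z : ℝ =>
          G (-v, -Real.sqrt (1 + 2 * z * v - z ^ 2), z - v) *
            (((1 + 2 * z * v - z ^ 2) ^ α : ℝ) : ℂ)) 0)) :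
    ∫ v : ℝ,
        iteratedDeriv j
          (fun z : ℝ =>
            G (-v, -Real.sqrt (1 + 2 * z * v - z ^ 2), z - v) *
              (((1 + 2 * z * v - z ^ 2) ^ α : ℝ) : ℂ)) 0 = 0 := by
  set F : ℝ → ℝ → ℂ := fun v z =>
    G (-v, -Real.sqrt (1 + 2 * z * v - z ^ 2), z - v) *
      (((1 + 2 * z * v - z ^ 2) ^ α : ℝ) : ℂ) with hF
  set f : ℝ → ℂ := fun v => iteratedDeriv j (F v) 0 with hf
  have key : ∀ v : ℝ, f (-v) = -f v := by
    intro v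
    have hεpos : (0 : ℝ) < 1 / (4 * (|v| + 1)) := by positivity
    have hev : F (-v) =ᶠ[nhds (0 : ℝ)] fun z => F v (-z) := by
      filter_upwards [Metric.ball_mem_nhds (0 : ℝ) hεpos] with z hz
      rw [Metric.mem_ball, Real.dist_eq, sub_zero] at hz
      have hv1 : (0 : ℝ) < |v| + 1 := by positivity
      have hzv : |z| * |v| < 1 / 4 := by
        have h1 : |z| * (|v| + 1) < (1 / (4 * (|v| + 1))) * (|v| + 1) := by
          exact mul_lt_mul_of_pos_right hz hv1
        have h2 : (1 / (4 * (|v| + 1))) * (|v| + 1) = 1 / 4 := by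
          field_simp
        nlinarith [abs_nonneg z, abs_nonneg v]
      have hz2 : z ^ 2 < 1 / 4 := by
        have hεle : 1 / (4 * (|v| + 1)) ≤ 1 / 4 :=
          one_div_le_one_div_of_le (by norm_num) (by nlinarith [abs_nonneg v])
        have : |z| < 1 / 2 := by linarith
        nlinarith [abs_nonneg z, sq_abs z]
      have hS : (0 : ℝ) < 1 + 2 * z * (-v) - z ^ 2 := by
        have : z * v ≤ |z| * |v| := by
          calc z * v ≤ |z * v| := le_abs_self _
          _ = |z| * |v| := abs_mul z v
        have h' : -(z * v) ≤ |z| * |v| := by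
          calc -(z * v) ≤ |z * v| := neg_le_abs _
          _ = |z| * |v| := abs_mul z v
        nlinarith
      have hSeq : 1 + 2 * (-z) * v - (-z) ^ 2 = 1 + 2 * z * (-v) - z ^ 2 := by ring
      simp only [hF]
      rw [hSeq]
      have harg1 : z - -v = z + v := by ring
      have harg2 : -z - v = -(z + v) := by ring
      rw [harg1, harg2, neg_neg]
      congr 1
      have hsq : Real.sqrt (1 + 2 * z * (-v) - z ^ 2) ^ 2 = 1 + 2 * z * (-v) - z ^ 2 :=
        Real.sq_sqrt hS.le
      have hcond : (-v) ^ 2 <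
          (-Real.sqrt (1 + 2 * z * (-v) - z ^ 2)) ^ 2 + (-(z + v)) ^ 2 := by
        have : (-Real.sqrt (1 + 2 * z * (-v) - z ^ 2)) ^ 2 = 1 + 2 * z * (-v) - z ^ 2 := by
          rw [neg_sq]; exact hsq
        rw [this]; nlinarith
      have := hsym (-v, -Real.sqrt (1 + 2 * z * (-v) - z ^ 2), -(z + v)) hcond
      simp only [neg_neg] at this
      exact this
    have h1 : f (-v) = iteratedDeriv j (fun z => F v (-z)) 0 :=
      iteratedDeriv_congr_nhds hev j
    rw [h1, iteratedDeriv_comp_neg, neg_zero, hj.neg_one_pow, neg_one_smul]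
  have h2 : ∫ v : ℝ, f v = ∫ v : ℝ, f (-v) := (integral_neg_eq_self f volume).symm
  have h3 : ∫ v : ℝ, f (-v) = -∫ v : ℝ, f v := by
    simp_rw [key]
    exact integral_neg f
  have h4 : ∫ v : ℝ, f v = 0 := by
    have := h2.trans h3
    exact add_self_eq_zero.mp (eq_neg_iff_add_eq_zero.mp this)
  exact h4
end

section
/- With d, p, q, the cone C, and G_f as in the context, suppose f : C → ℂ is continuous, homogeneous of degree zero, and rapidly decreasing on the hyperboloid {Q = -1}. Then G_f is homogeneous of degree dp + d - 1: for every λ > 0 and every (t₁,t₂,t₃) with t₁² - t₂² - t₃² < 0, G_f(λt₁, λt₂, λt₃) = λ^{dp+d-1} · G_f(t₁,t₂,t₃). -/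
open MeasureTheory

/-- Points of `ℝⁿ`, `n = d(p+q+2)`, written as
`x = (a, w₁, u, u', y, w₂, b) ∈ ℝ × ℝ^{d-1} × ℝ^{dp} × ℝ^{dp} × ℝ^{d(q-p)} × ℝ^{d-1} × ℝ`. -/
abbrev HypPoint (d p q : ℕ) :=
  ℝ × (Fin (d - 1) → ℝ) × (Fin (d * p) → ℝ) × (Fin (d * p) → ℝ) ×
    (Fin (d * (q - p)) → ℝ) × (Fin (d - 1) → ℝ) × ℝ

/-- The quadratic form `Q(x) = a² + |w₁|² + |u|² - |u'|² - |y|² - |w₂|² - b²`. -/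
def Qform {d p q : ℕ} (x : HypPoint d p q) : ℝ :=
  x.1 ^ 2 + (∑ i, x.2.1 i ^ 2) + (∑ i, x.2.2.1 i ^ 2) - (∑ i, x.2.2.2.1 i ^ 2) -
    (∑ i, x.2.2.2.2.1 i ^ 2) - (∑ i, x.2.2.2.2.2.1 i ^ 2) - x.2.2.2.2.2.2 ^ 2

/-- The Euclidean norm `|x|` of a point `x`. -/
noncomputable def normE {d p q : ℕ} (x : HypPoint d p q) : ℝ :=
  Real.sqrt (x.1 ^ 2 + (∑ i, x.2.1 i ^ 2) + (∑ i, x.2.2.1 i ^ 2) + (∑ i, x.2.2.2.1 i ^ 2) +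
    (∑ i, x.2.2.2.2.1 i ^ 2) + (∑ i, x.2.2.2.2.2.1 i ^ 2) + x.2.2.2.2.2.2 ^ 2)

/-- `G_f(t₁,t₂,t₃) = ∫_{S^{d(q-p)-1}} ∫_{ℝ^{dp}} ∫_{ℝ^{d-1}} f(t₁, w̄, u, -u, t₂v̄, w̄, t₃)
dw̄ du dσ(v̄)`, where `σ` is the surface measure on the unit sphere
`S^{d(q-p)-1} ⊂ ℝ^{d(q-p)}`. -/
noncomputable def Gf {d p q : ℕ} (f : HypPoint d p q → ℂ) (t : ℝ × ℝ × ℝ) : ℂ :=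
  ∫ vb : Metric.sphere (0 : EuclideanSpace ℝ (Fin (d * (q - p)))) 1,
    (∫ u : Fin (d * p) → ℝ, ∫ wb : Fin (d - 1) → ℝ,
      f (t.1, wb, u, -u,
        fun i => t.2.1 * (vb : EuclideanSpace ℝ (Fin (d * (q - p)))) i, wb, t.2.2))
    ∂(volume : Measure (EuclideanSpace ℝ (Fin (d * (q - p))))).toSphere

lemma scale_int {n : ℕ} (g : (Fin n → ℝ) → ℂ) {lam : ℝ} (h : 0 < lam) :
    ∫ x, g x = (lam ^ n : ℝ) • ∫ x, g (lam • x) := by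
  rw [MeasureTheory.Measure.integral_comp_smul_of_nonneg volume g lam (hR := h.le),
    Module.finrank_fin_fun, smul_smul, mul_inv_cancel₀ (by positivity), one_smul]

/-- If `f` is continuous on the cone `C = {Q < 0}`, homogeneous of degree zero, and
rapidly decreasing on the hyperboloid `{Q = -1}`, then `G_f` is homogeneous of degree
`dp + d - 1`: for every `λ > 0` and `(t₁,t₂,t₃)` with `t₁² - t₂² - t₃² < 0`,
`G_f(λt₁, λt₂, λt₃) = λ^{dp+d-1} G_f(t₁,t₂,t₃)`. -/
theorem Gf_homogeneous (d p q : ℕ) (hd : d = 1 ∨ d = 2 ∨ d = 4) (hpq : p < q)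
    (f : HypPoint d p q → ℂ)
    (hcont : ContinuousOn f {x | Qform x < 0})
    (hhom : ∀ (lam : ℝ), lam ≠ 0 → ∀ x : HypPoint d p q, Qform x < 0 → f (lam • x) = f x)
    (hdecay : ∀ M : ℕ, ∃ CM : ℝ, ∀ x : HypPoint d p q, Qform x = -1 →
      ‖f x‖ ≤ CM * (1 + normE x) ^ (-(M : ℝ))) :
    ∀ lam : ℝ, 0 < lam → ∀ t : ℝ × ℝ × ℝ, t.1 ^ 2 - t.2.1 ^ 2 - t.2.2 ^ 2 < 0 →
      Gf f (lam * t.1, lam * t.2.1, lam * t.2.2) =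
        ((lam ^ (d * p + d - 1) : ℝ) : ℂ) * Gf f t := by
  intro lam hlam t ht
  have hlam' : lam ≠ 0 := ne_of_gt hlam
  have hd1 : 1 ≤ d := by rcases hd with h | h | h <;> omega
  unfold Gf
  rw [← integral_const_mul]
  refine integral_congr_ae (Filter.Eventually.of_forall fun vb => ?_)
  dsimp only
  have hv : ∑ i, (vb : EuclideanSpace ℝ (Fin (d * (q - p)))) i ^ 2 = 1 := by
    have hnorm : ‖(vb : EuclideanSpace ℝ (Fin (d * (q - p))))‖ = 1 := by
      simpa using mem_sphere_zero_iff_norm.mp vb.2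
    rw [EuclideanSpace.norm_eq] at hnorm
    have := congrArg (· ^ 2) hnorm
    simp only [one_pow] at this
    rw [Real.sq_sqrt (by positivity)] at this
    simpa [Real.norm_eq_abs, sq_abs] using this
  have hsum : ∑ i, (t.2.1 * (vb : EuclideanSpace ℝ (Fin (d * (q - p)))) i) ^ 2
      = t.2.1 ^ 2 := by
    simp_rw [mul_pow, ← Finset.mul_sum, hv, mul_one]
  have hQ : ∀ (u : Fin (d * p) → ℝ) (wb : Fin (d - 1) → ℝ),
      Qform ((t.1, wb, u, -u,
        fun i => t.2.1 * (vb : EuclideanSpace ℝ (Fin (d * (q - p)))) i, wb, t.2.2) :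
        HypPoint d p q) < 0 := by
    intro u wb
    simp only [Qform, Pi.neg_apply, neg_sq]
    rw [hsum]
    linarith
  have key : ∀ u : Fin (d * p) → ℝ,
      (∫ wb : Fin (d - 1) → ℝ, f (lam * t.1, wb, lam • u, -(lam • u),
        fun i => lam * t.2.1 * (vb : EuclideanSpace ℝ (Fin (d * (q - p)))) i, wb,
        lam * t.2.2))
      = (lam ^ (d - 1) : ℝ) • ∫ wb : Fin (d - 1) → ℝ, f (t.1, wb, u, -u,
        fun i => t.2.1 * (vb : EuclideanSpace ℝ (Fin (d * (q - p)))) i, wb, t.2.2) := by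
    intro u
    rw [scale_int (fun wb => f (lam * t.1, wb, lam • u, -(lam • u),
      fun i => lam * t.2.1 * (vb : EuclideanSpace ℝ (Fin (d * (q - p)))) i, wb,
      lam * t.2.2)) hlam]
    congr 1
    refine integral_congr_ae (Filter.Eventually.of_forall fun wb => ?_)
    have hx := hhom lam hlam' (t.1, wb, u, -u,
      fun i => t.2.1 * (vb : EuclideanSpace ℝ (Fin (d * (q - p)))) i, wb, t.2.2)
      (hQ u wb)
    dsimp only
    rw [← hx]
    congr 1
    simp only [Prod.smul_mk, smul_eq_mul, smul_neg]
    refine congrArg₂ Prod.mk rfl (congrArg₂ Prod.mk rfl (congrArg₂ Prod.mk rfl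
      (congrArg₂ Prod.mk rfl (congrArg₂ Prod.mk ?_ rfl))))
    funext i
    simp [Pi.smul_apply, smul_eq_mul, mul_assoc]
  rw [scale_int (fun u => ∫ wb : Fin (d - 1) → ℝ, f (lam * t.1, wb, u, -u,
    fun i => lam * t.2.1 * (vb : EuclideanSpace ℝ (Fin (d * (q - p)))) i, wb,
    lam * t.2.2)) hlam]
  simp_rw [key]
  rw [integral_smul, smul_smul, ← pow_add]
  have hexp : d * p + (d - 1) = d * p + d - 1 := by omega
  rw [hexp, Complex.real_smul]
end

section
/- With d, p, q, the cone C, and G_f as in the context, set ρ_q = (dp + dq + 2(d-1))/2, and suppose f : C → ℂ is continuous, homogeneous of degree zero, and satisfies: for every M ∈ ℕ there is a constant C_M such that |f(x)| ≤ C_M (1+|x|)^{-ρ_q} (1 + log(1+|x|²))^{-M} whenever Q(x) = -1. Then for every M ∈ ℕ there is a constant C'_M such that |G_f(t₁,t₂,t₃)| ≤ C'_M (t₂² + t₃²)^{-d(q-p)/4} (1 + log(t₂² + t₃²))^{-M} for all (t₁,t₂,t₃) with t₁² - t₂² - t₃² = -1. -/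
open MeasureTheory

/-!
At a point of the slice, `x = (t₁, w̄, u, -u, t₂v̄, w̄, t₃)` with `|v̄| = 1` and
`t₁² - t₂² - t₃² = -1`, we have `Q(x) = -1` and `1 + |x|² = 2(s + |u|² + |w̄|²)` where
`s = t₂² + t₃² ≥ 1`. The decay hypothesis therefore bounds the integrand by
`C (1 + log s)^{-M} (s + |u|² + |w̄|²)^{-ρ_q/2}`. Integrating first over `w̄ ∈ ℝ^{d-1}` and then
over `u ∈ ℝ^{dp}` with the scaling identity
`∫_{ℝⁿ} (A + |z|²)^{-r/2} dz = A^{(n-r)/2} ∫_{ℝⁿ} (1 + |z|²)^{-r/2} dz` (finite for `r > n`)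
leaves `s^{(d-1 + dp - ρ_q)/2} = s^{-d(q-p)/4}`, and the sphere has finite measure.
-/

open Real

noncomputable def japaneseBracketIntegral (ι : Type*) [Fintype ι] (r : ℝ) : ℝ :=
  ∫ z : ι → ℝ, (1 + ∑ i, z i ^ 2) ^ (-r / 2)

section BracketIntegrals

variable {ι : Type*} [Fintype ι]

lemma add_sum_sq_sqrt_smul {A : ℝ} (hA : 0 ≤ A) (w : ι → ℝ) :
    A + ∑ i, (√A • w) i ^ 2 = A * (1 + ∑ i, w i ^ 2) := by
  simp only [Pi.smul_apply, smul_eq_mul, mul_pow, ← Finset.mul_sum, sq_sqrt hA]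
  ring

lemma integrable_one_add_sum_sq_rpow {r : ℝ} (hr : Fintype.card ι < r) :
    Integrable fun z : ι → ℝ => (1 + ∑ i, z i ^ 2) ^ (-r / 2) := by
  have h := integrable_rpow_neg_one_add_norm_sq (E := EuclideanSpace ℝ ι) (μ := volume)
    (r := r) (by simpa using hr)
  rw [← (PiLp.volume_preserving_toLp ι).integrable_comp_emb
    (MeasurableEquiv.toLp 2 _).measurableEmbedding] at h
  simpa [Function.comp_def, EuclideanSpace.real_norm_sq_eq] using h

lemma integrable_add_sum_sq_rpow {A r : ℝ} (hA : 0 < A) (hr : Fintype.card ι < r) :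
    Integrable fun z : ι → ℝ => (A + ∑ i, z i ^ 2) ^ (-r / 2) := by
  refine (integrable_comp_smul_iff volume _ (sqrt_pos.2 hA).ne').1 ?_
  simp_rw [add_sum_sq_sqrt_smul hA.le]
  refine ((integrable_one_add_sum_sq_rpow hr).const_mul (A ^ (-r / 2))).congr
    (.of_forall fun w => ?_)
  dsimp only
  rw [mul_rpow hA.le (by positivity)]

lemma integral_add_sum_sq_rpow {A : ℝ} (hA : 0 < A) (r : ℝ) :
    ∫ z : ι → ℝ, (A + ∑ i, z i ^ 2) ^ (-r / 2) =
      A ^ ((Fintype.card ι - r) / 2) * ∫ z : ι → ℝ, (1 + ∑ i, z i ^ 2) ^ (-r / 2) := by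
  have hscale (w : ι → ℝ) : (A + ∑ i, (√A • w) i ^ 2) ^ (-r / 2) =
      A ^ (-r / 2) * (1 + ∑ i, w i ^ 2) ^ (-r / 2) := by
    rw [add_sum_sq_sqrt_smul hA.le, mul_rpow hA.le (by positivity)]
  have hjac : |(√A ^ Module.finrank ℝ (ι → ℝ))⁻¹| = A ^ (-((Fintype.card ι : ℝ) / 2)) := by
    rw [abs_of_nonneg (by positivity), Module.finrank_fintype_fun_eq_card, sqrt_eq_rpow,
      ← rpow_natCast, ← rpow_mul hA.le, ← rpow_neg hA.le]
    ring_nf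
  have h := Measure.integral_comp_smul volume (fun z : ι → ℝ => (A + ∑ i, z i ^ 2) ^ (-r / 2)) √A
  rw [hjac, smul_eq_mul] at h
  simp only [hscale, integral_const_mul] at h
  rw [show ((Fintype.card ι : ℝ) - r) / 2 = Fintype.card ι / 2 + -r / 2 by ring, rpow_add hA,
    mul_assoc, h, ← mul_assoc, ← rpow_add hA, add_neg_cancel, rpow_zero, one_mul]

variable {E : Type*} [NormedAddCommGroup E] [NormedSpace ℝ E]

lemma norm_integral_le_of_norm_le_add_sum_sq_rpow {g : (ι → ℝ) → E} {C A r : ℝ} (hA : 0 < A)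
    (hr : Fintype.card ι < r) (hg : ∀ z, ‖g z‖ ≤ C * (A + ∑ i, z i ^ 2) ^ (-r / 2)) :
    ‖∫ z, g z‖ ≤ C * japaneseBracketIntegral ι r * A ^ ((Fintype.card ι - r) / 2) := by
  calc ‖∫ z, g z‖ ≤ ∫ z : ι → ℝ, C * (A + ∑ i, z i ^ 2) ^ (-r / 2) := by
        refine norm_integral_le_of_norm_le ?_ (.of_forall hg)
        exact (integrable_add_sum_sq_rpow hA hr).const_mul C
    _ = C * japaneseBracketIntegral ι r * A ^ ((Fintype.card ι - r) / 2) := by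
        rw [integral_const_mul, integral_add_sum_sq_rpow hA, japaneseBracketIntegral]
        ring

lemma norm_integral_integral_le_of_norm_le_add_sum_sq_rpow {κ : Type*} [Fintype κ]
    {g : (κ → ℝ) → (ι → ℝ) → E} {C A r : ℝ} (hA : 0 < A)
    (hr : Fintype.card ι + Fintype.card κ < r)
    (hg : ∀ u w, ‖g u w‖ ≤ C * (A + ∑ j, u j ^ 2 + ∑ i, w i ^ 2) ^ (-r / 2)) :
    ‖∫ u, ∫ w, g u w‖ ≤ C * japaneseBracketIntegral ι r *
      japaneseBracketIntegral κ (r - Fintype.card ι) *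
        A ^ ((Fintype.card ι + Fintype.card κ - r) / 2) := by
  have hinner (u : κ → ℝ) : ‖∫ w, g u w‖ ≤ C * japaneseBracketIntegral ι r *
      (A + ∑ j, u j ^ 2) ^ (-(r - Fintype.card ι) / 2) := by
    rw [show -(r - Fintype.card ι) / 2 = (Fintype.card ι - r) / 2 by ring]
    exact norm_integral_le_of_norm_le_add_sum_sq_rpow (by positivity) (by linarith) (hg u)
  have h := norm_integral_le_of_norm_le_add_sum_sq_rpow hA (by linarith) hinner
  rwa [show ((Fintype.card κ : ℝ) - (r - Fintype.card ι)) / 2 =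
    (Fintype.card ι + Fintype.card κ - r) / 2 by ring] at h

end BracketIntegrals

section Slice

variable {d p q : ℕ}

def slicePoint (t : ℝ × ℝ × ℝ) (v : EuclideanSpace ℝ (Fin (d * (q - p))))
    (u : Fin (d * p) → ℝ) (w : Fin (d - 1) → ℝ) : HypPoint d p q :=
  (t.1, w, u, -u, fun i => t.2.1 * v i, w, t.2.2)

lemma sum_mul_sq_of_norm_eq_one {ι : Type*} [Fintype ι] {v : EuclideanSpace ℝ ι}
    (hv : ‖v‖ = 1) (c : ℝ) : ∑ i, (c * v i) ^ 2 = c ^ 2 := by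
  simp only [mul_pow, ← Finset.mul_sum, ← EuclideanSpace.real_norm_sq_eq, hv, one_pow, mul_one]

variable {t : ℝ × ℝ × ℝ} {v : EuclideanSpace ℝ (Fin (d * (q - p)))}

lemma Qform_slicePoint (hv : ‖v‖ = 1) (u : Fin (d * p) → ℝ) (w : Fin (d - 1) → ℝ) :
    Qform (slicePoint t v u w) = t.1 ^ 2 - t.2.1 ^ 2 - t.2.2 ^ 2 := by
  simp only [Qform, slicePoint, sum_mul_sq_of_norm_eq_one hv, Pi.neg_apply, neg_sq]
  ring

lemma normE_sq_slicePoint (hv : ‖v‖ = 1) (u : Fin (d * p) → ℝ) (w : Fin (d - 1) → ℝ) :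
    normE (slicePoint t v u w) ^ 2 =
      t.1 ^ 2 + t.2.1 ^ 2 + t.2.2 ^ 2 + 2 * ∑ j, u j ^ 2 + 2 * ∑ i, w i ^ 2 := by
  simp only [normE, slicePoint, sum_mul_sq_of_norm_eq_one hv, Pi.neg_apply, neg_sq]
  rw [Real.sq_sqrt (by positivity)]
  ring

lemma norm_apply_slicePoint_le {f : HypPoint d p q → ℂ} {C r : ℝ} {M : ℕ} (hr : 0 ≤ r)
    (hf : ∀ x : HypPoint d p q, Qform x = -1 →
      ‖f x‖ ≤ C * (1 + normE x) ^ (-r / 2) * (1 + log (1 + normE x ^ 2)) ^ (-(M : ℝ)))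
    (ht : t.1 ^ 2 - t.2.1 ^ 2 - t.2.2 ^ 2 = -1) (hv : ‖v‖ = 1)
    (u : Fin (d * p) → ℝ) (w : Fin (d - 1) → ℝ) :
    ‖f (slicePoint t v u w)‖ ≤ max C 0 * (1 + log (t.2.1 ^ 2 + t.2.2 ^ 2)) ^ (-(M : ℝ)) *
      (t.2.1 ^ 2 + t.2.2 ^ 2 + ∑ j, u j ^ 2 + ∑ i, w i ^ 2) ^ (-(r / 2) / 2) := by
  set s := t.2.1 ^ 2 + t.2.2 ^ 2
  set S := s + ∑ j, u j ^ 2 + ∑ i, w i ^ 2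
  set R := normE (slicePoint t v u w)
  have hR : 0 ≤ R := sqrt_nonneg _
  have hRS : 1 + R ^ 2 = 2 * S := by
    rw [normE_sq_slicePoint hv]
    linear_combination ht
  have hs : 1 ≤ s := by nlinarith [sq_nonneg t.1]
  have hsS : s ≤ S := by
    have : 0 ≤ ∑ j, u j ^ 2 + ∑ i, w i ^ 2 := by positivity
    linarith
  have hweight : (1 + R) ^ (-r / 2) ≤ S ^ (-(r / 2) / 2) := by
    rw [show (1 + R) ^ (-r / 2) = ((1 + R) ^ 2) ^ (-(r / 2) / 2) by
      rw [← rpow_natCast, ← rpow_mul (by positivity)]; ring_nf]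
    exact rpow_le_rpow_of_nonpos (by linarith) (by nlinarith) (by linarith)
  have hlog_pos : 0 < 1 + log (1 + R ^ 2) := by
    linarith [log_nonneg (by nlinarith : (1 : ℝ) ≤ 1 + R ^ 2)]
  have hlog : (1 + log (1 + R ^ 2)) ^ (-(M : ℝ)) ≤ (1 + log s) ^ (-(M : ℝ)) := by
    refine rpow_le_rpow_of_nonpos (by linarith [log_nonneg hs]) ?_ (by simp)
    gcongr
    linarith
  calc ‖f (slicePoint t v u w)‖
      ≤ C * (1 + R) ^ (-r / 2) * (1 + log (1 + R ^ 2)) ^ (-(M : ℝ)) :=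
        hf _ (by rw [Qform_slicePoint hv, ht])
    _ ≤ max C 0 * S ^ (-(r / 2) / 2) * (1 + log s) ^ (-(M : ℝ)) := by
        gcongr
        exact le_max_left C 0
    _ = max C 0 * (1 + log s) ^ (-(M : ℝ)) * S ^ (-(r / 2) / 2) := by ring

end Slice

theorem Gf_decay_general (d p q : ℕ) (hd : d = 1 ∨ d = 2 ∨ d = 4) (hpq : p < q)
    (f : HypPoint d p q → ℂ)
    (hdecay : ∀ M : ℕ, ∃ CM : ℝ, ∀ x : HypPoint d p q, Qform x = -1 →
      ‖f x‖ ≤ CM * (1 + normE x) ^ (-((d * p + d * q + 2 * (d - 1) : ℕ) : ℝ) / 2) *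
        (1 + Real.log (1 + normE x ^ 2)) ^ (-(M : ℝ))) :
    ∀ M : ℕ, ∃ CM' : ℝ, ∀ t : ℝ × ℝ × ℝ, t.1 ^ 2 - t.2.1 ^ 2 - t.2.2 ^ 2 = -1 →
      ‖Gf f t‖ ≤ CM' * (t.2.1 ^ 2 + t.2.2 ^ 2) ^ (-((d * (q - p) : ℕ) : ℝ) / 4) *
        (1 + Real.log (t.2.1 ^ 2 + t.2.2 ^ 2)) ^ (-(M : ℝ)) := by
  have hd1 : 1 ≤ d := by rcases hd with rfl | rfl | rfl <;> norm_num
  intro M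
  obtain ⟨C, hC⟩ := hdecay M
  set N := d * p + d * q + 2 * (d - 1)
  set σ := (volume : Measure (EuclideanSpace ℝ (Fin (d * (q - p))))).toSphere
  refine ⟨σ.real Set.univ * max C 0 * japaneseBracketIntegral (Fin (d - 1)) (N / 2) *
    japaneseBracketIntegral (Fin (d * p)) (N / 2 - Fintype.card (Fin (d - 1))), fun t ht => ?_⟩
  have hexp : ((Fintype.card (Fin (d - 1)) : ℝ) + Fintype.card (Fin (d * p)) - N / 2) / 2 =
      -((d * (q - p) : ℕ) : ℝ) / 4 := by
    rw [Nat.mul_sub]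
    simp only [Fintype.card_fin, N]
    push_cast [hd1, Nat.mul_le_mul_left d hpq.le]
    ring
  have hm : (0 : ℝ) < (d * (q - p) : ℕ) := by
    exact_mod_cast Nat.mul_pos hd1 (Nat.sub_pos_of_lt hpq)
  have hslice (v : Metric.sphere (0 : EuclideanSpace ℝ (Fin (d * (q - p)))) 1) :=
    norm_integral_integral_le_of_norm_le_add_sum_sq_rpow (by nlinarith [sq_nonneg t.1])
      (by linarith)
      (norm_apply_slicePoint_le (f := f) (Nat.cast_nonneg N) hC ht
        (mem_sphere_zero_iff_norm.1 v.2))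
  calc ‖Gf f t‖ ≤ _ * σ.real Set.univ := norm_integral_le_of_norm_le_const (.of_forall hslice)
    _ = _ := by
      rw [hexp]
      ring

/-- Set `ρ_q = (dp + dq + 2(d-1))/2`. If `f` is continuous on the cone `C = {Q < 0}`,
homogeneous of degree zero, and for every `M ∈ ℕ` satisfies
`‖f(x)‖ ≤ C_M (1+|x|)^{-ρ_q} (1 + log(1+|x|²))^{-M}` on `{Q = -1}`, then for every
`M ∈ ℕ` there is `C'_M` with
`‖G_f(t)‖ ≤ C'_M (t₂²+t₃²)^{-d(q-p)/4} (1 + log(t₂²+t₃²))^{-M}` on `{t₁²-t₂²-t₃² = -1}`. -/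
theorem Gf_decay (d p q : ℕ) (hd : d = 1 ∨ d = 2 ∨ d = 4) (hpq : p < q)
    (f : HypPoint d p q → ℂ)
    (hcont : ContinuousOn f {x | Qform x < 0})
    (hhom : ∀ (lam : ℝ), lam ≠ 0 → ∀ x : HypPoint d p q, Qform x < 0 → f (lam • x) = f x)
    (hdecay : ∀ M : ℕ, ∃ CM : ℝ, ∀ x : HypPoint d p q, Qform x = -1 →
      ‖f x‖ ≤ CM * (1 + normE x) ^ (-((d * p + d * q + 2 * (d - 1) : ℕ) : ℝ) / 2) *
        (1 + Real.log (1 + normE x ^ 2)) ^ (-(M : ℝ))) :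
    ∀ M : ℕ, ∃ CM' : ℝ, ∀ t : ℝ × ℝ × ℝ, t.1 ^ 2 - t.2.1 ^ 2 - t.2.2 ^ 2 = -1 →
      ‖Gf f t‖ ≤ CM' * (t.2.1 ^ 2 + t.2.2 ^ 2) ^ (-((d * (q - p) : ℕ) : ℝ) / 4) *
        (1 + Real.log (t.2.1 ^ 2 + t.2.2 ^ 2)) ^ (-(M : ℝ)) :=
  Gf_decay_general d p q hd hpq f hdecay
end

section
/- With d, p, q, the cone C, and G_f as in the context, suppose f : C → ℂ is continuous, homogeneous of degree zero, and rapidly decreasing on the hyperboloid {Q = -1}. Then for every s ∈ ℝ, writing z = e^{-s}, the following change-of-variables identity holds: ∫_{ℝ^{d(q-p)}} ∫_{ℝ^{dp}} ∫_{ℝ^{d-1}} f( sinh s - (1/2)e^s|v'|², e^s w, u, -u, -v', e^s w, cosh s - (1/2)e^s|v'|² ) dw du dv' = e^{-ds} ∫_{-sinh s}^{∞} G_f( -v, -(1+2zv-z²)^{1/2}, z - v ) · (1+2zv-z²)^{d(q-p)/2 - 1} dv, both sides being absolutely convergent. -/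
/-!
The chart `(v', u, w) ↦ (sinh s - ½eˢ|v'|², eˢw, u, -u, -v', eˢw, cosh s - ½eˢ|v'|²)` takes
values in `{Q = -1}`, and there the Euclidean norm dominates `|(v', u, w)|` up to the factor
`max 1 e^{-s}`; so rapid decay of `f` makes the left-hand integrand integrable. Rescaling `w`
produces the factor `e^{-(d-1)s}`, and polar coordinates `v' = r v̄` in `ℝ^{d(q-p)}` turn the
left-hand side into `∫_0^∞ r^{d(q-p)-1} G_f(sinh s - ½eˢr², -r, cosh s - ½eˢr²) dr`. Finally the
substitution `v = ½eˢr² - sinh s`, for which `1 + 2zv - z² = r²`, `z - v = cosh s - ½eˢr²` and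
`dv = eˢ r dr`, yields the right-hand side.
-/

open MeasureTheory

open Set

lemma rpow_neg_le_of_le_mul {a b c r : ℝ} (ha : 0 < a) (hc : 0 < c) (hab : a ≤ c * b)
    (hr : 0 ≤ r) : b ^ (-r) ≤ c ^ r * a ^ (-r) := by
  have hb : 0 < b := pos_of_mul_pos_right (ha.trans_le hab) hc.le
  calc b ^ (-r) = c ^ r * (c * b) ^ (-r) := by
        rw [Real.mul_rpow hc.le hb.le, Real.rpow_neg hc.le, mul_inv_cancel_left₀
          (Real.rpow_pos_of_pos hc r).ne']
    _ ≤ c ^ r * a ^ (-r) := mul_le_mul_of_nonneg_left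
        (Real.rpow_le_rpow_of_nonpos ha hab (neg_nonpos.mpr hr)) (Real.rpow_nonneg hc.le r)

lemma sq_rpow_half_sub_one_mul_self {r : ℝ} (hr : 0 < r) {m : ℕ} (hm : 0 < m) :
    (r ^ 2) ^ ((m : ℝ) / 2 - 1) * r = r ^ (m - 1) := by
  rw [← Real.rpow_natCast r 2, ← Real.rpow_mul hr.le, ← Real.rpow_add_one hr.ne',
    ← Real.rpow_natCast, Nat.cast_sub hm]
  congr 1
  push_cast
  ring

lemma pi_norm_le_sqrt_sum_sq {ι : Type*} [Fintype ι] (v : ι → ℝ) : ‖v‖ ≤ √(∑ i, v i ^ 2) := by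
  refine (pi_norm_le_iff_of_nonneg (Real.sqrt_nonneg _)).mpr fun i => ?_
  simpa [EuclideanSpace.norm_eq] using PiLp.norm_apply_le (WithLp.toLp 2 v) i

section QuadraticSubstitution

variable {G : Type*} [NormedAddCommGroup G] [NormedSpace ℝ G] {a : ℝ}

lemma image_quadratic_Ioi (ha : 0 < a) (b : ℝ) :
    (fun r => a * r ^ 2 + b) '' Ioi 0 = Ioi b := by
  ext v
  simp only [mem_image, mem_Ioi]
  constructor
  · rintro ⟨r, hr, rfl⟩
    have := mul_pos ha (pow_pos hr 2)
    linarith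
  · intro hv
    refine ⟨√((v - b) / a), Real.sqrt_pos.mpr (div_pos (by linarith) ha), ?_⟩
    rw [Real.sq_sqrt (div_pos (by linarith) ha).le]
    field_simp
    ring

lemma injOn_quadratic_Ioi (ha : 0 < a) (b : ℝ) : InjOn (fun r => a * r ^ 2 + b) (Ioi 0) := by
  intro r hr t ht h
  have : r ^ 2 = t ^ 2 := mul_left_cancel₀ ha.ne' (add_right_cancel h)
  exact (pow_left_inj₀ hr.out.le ht.out.le two_ne_zero).mp this

lemma hasDerivWithinAt_quadratic (b r : ℝ) (s : Set ℝ) :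
    HasDerivWithinAt (fun r => a * r ^ 2 + b) (2 * a * r) s r := by
  simpa [mul_comm, mul_left_comm, mul_assoc] using
    (((hasDerivAt_pow 2 r).const_mul a).add_const b).hasDerivWithinAt

lemma integrableOn_Ioi_comp_quadratic_iff (ha : 0 < a) (b : ℝ) (F : ℝ → G) :
    IntegrableOn (fun r => (2 * a * r) • F (a * r ^ 2 + b)) (Ioi 0) ↔ IntegrableOn F (Ioi b) := by
  rw [← image_quadratic_Ioi ha b, integrableOn_image_iff_integrableOn_abs_deriv_smul
    measurableSet_Ioi (fun r _ => hasDerivWithinAt_quadratic b r _) (injOn_quadratic_Ioi ha b)]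
  refine integrableOn_congr_fun (fun r hr => ?_) measurableSet_Ioi
  rw [abs_of_pos (by have := hr.out; positivity)]

lemma integral_Ioi_comp_quadratic (ha : 0 < a) (b : ℝ) (F : ℝ → G) :
    ∫ r in Ioi 0, (2 * a * r) • F (a * r ^ 2 + b) = ∫ v in Ioi b, F v := by
  rw [← image_quadratic_Ioi ha b, integral_image_eq_integral_abs_deriv_smul
    measurableSet_Ioi (fun r _ => hasDerivWithinAt_quadratic b r _) (injOn_quadratic_Ioi ha b)]
  refine setIntegral_congr_fun measurableSet_Ioi (fun r hr => ?_)
  rw [abs_of_pos (by have := hr.out; positivity)]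

end QuadraticSubstitution

namespace MeasureTheory

section VolumeIoiPow

variable {G : Type*} [NormedAddCommGroup G] [NormedSpace ℝ G]

lemma integral_volumeIoiPow (n : ℕ) (φ : ℝ → G) :
    ∫ r : Ioi (0 : ℝ), φ r ∂(Measure.volumeIoiPow n) = ∫ r in Ioi (0 : ℝ), r ^ n • φ r := by
  simp only [Measure.volumeIoiPow, ENNReal.ofReal]
  rw [integral_withDensity_eq_integral_smul
      ((measurable_subtype_coe.pow_const _).real_toNNReal),
    integral_subtype_comap measurableSet_Ioi fun r : ℝ => (r ^ n).toNNReal • φ r]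
  refine setIntegral_congr_fun measurableSet_Ioi fun r hr => ?_
  rw [NNReal.smul_def, Real.coe_toNNReal _ (pow_nonneg hr.out.le _)]

lemma integrable_volumeIoiPow_iff (n : ℕ) (φ : ℝ → G) :
    Integrable (fun r : Ioi (0 : ℝ) => φ r) (Measure.volumeIoiPow n) ↔
      IntegrableOn (fun r => r ^ n • φ r) (Ioi (0 : ℝ)) := by
  simp only [Measure.volumeIoiPow, ENNReal.ofReal]
  rw [integrable_withDensity_iff_integrable_smul
      ((measurable_subtype_coe.pow_const _).real_toNNReal),
    integrableOn_iff_comap_subtypeVal measurableSet_Ioi]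
  refine integrable_congr (.of_forall fun r => ?_)
  simp only [Function.comp_apply, NNReal.smul_def,
    Real.coe_toNNReal _ (pow_nonneg r.2.out.le _)]

end VolumeIoiPow

section PolarCoordinates

variable {E F : Type*} [NormedAddCommGroup E] [NormedSpace ℝ E] [FiniteDimensional ℝ E]
  [MeasurableSpace E] [BorelSpace E] [Nontrivial E] {μ : Measure E} [μ.IsAddHaarMeasure]
  [NormedAddCommGroup F] {g : E → F}

local notation "dim" => Module.finrank ℝ

lemma integrable_comp_homeomorphUnitSphereProd_symm (hg : Integrable g μ) :
    Integrable (fun x => g ((homeomorphUnitSphereProd E).symm x))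
      (μ.toSphere.prod (Measure.volumeIoiPow (dim E - 1))) := by
  have hg' : Integrable (g ∘ Subtype.val) (μ.comap (Subtype.val : ({0}ᶜ : Set E) → E)) := by
    rw [← integrableOn_iff_comap_subtypeVal (measurableSet_singleton 0).compl, IntegrableOn,
      restrict_compl_singleton]
    exact hg
  rw [← (μ.measurePreserving_homeomorphUnitSphereProd.integrable_comp_emb
    (Homeomorph.measurableEmbedding _))]
  simpa only [Function.comp_def, Homeomorph.symm_apply_apply] using hg'

variable [NormedSpace ℝ F]

lemma integral_comp_homeomorphUnitSphereProd_symm (g : E → F) :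
    ∫ x, g ((homeomorphUnitSphereProd E).symm x)
      ∂(μ.toSphere.prod (Measure.volumeIoiPow (dim E - 1))) = ∫ x, g x ∂μ := by
  rw [← restrict_compl_singleton (μ := μ) 0,
    ← integral_subtype_comap (measurableSet_singleton _).compl,
    restrict_compl_singleton,
    ← μ.measurePreserving_homeomorphUnitSphereProd.integral_comp
      (Homeomorph.measurableEmbedding _)]
  simp only [Homeomorph.symm_apply_apply]

lemma Integrable.integrableOn_Ioi_integral_sphere (hg : Integrable g μ) :
    IntegrableOn (fun r : ℝ => r ^ (dim E - 1) • ∫ v, g (r • (v : E)) ∂μ.toSphere) (Ioi 0) := by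
  rw [← integrable_volumeIoiPow_iff]
  simpa using (integrable_comp_homeomorphUnitSphereProd_symm hg).integral_prod_right

lemma integral_eq_integral_Ioi_integral_sphere (hg : Integrable g μ) :
    ∫ x, g x ∂μ = ∫ r in Ioi (0 : ℝ), r ^ (dim E - 1) • ∫ v, g (r • (v : E)) ∂μ.toSphere := by
  rw [← integral_comp_homeomorphUnitSphereProd_symm,
    integral_prod_symm _ (integrable_comp_homeomorphUnitSphereProd_symm hg),
    ← integral_volumeIoiPow]
  simp

end PolarCoordinates

lemma Integrable.integrable_integral_integral {α β γ E : Type*} [MeasurableSpace α]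
    [MeasurableSpace β] [MeasurableSpace γ] [NormedAddCommGroup E] [NormedSpace ℝ E]
    {μ : Measure α} {ν : Measure β} {κ : Measure γ} [SFinite μ] [SFinite ν] [SFinite κ]
    {F : α × β × γ → E} (hF : Integrable F (μ.prod (ν.prod κ))) :
    Integrable (fun x => ∫ y, ∫ z, F (x, y, z) ∂κ ∂ν) μ := by
  refine hF.integral_prod_left.congr ?_
  filter_upwards [hF.prod_right_ae] with x hx
  exact integral_prod _ hx

section EuclideanPolar

variable {F : Type*} [NormedAddCommGroup F] [NormedSpace ℝ F] {n : ℕ} [NeZero n]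
  {g : (Fin n → ℝ) → F}

lemma Integrable.integrableOn_Ioi_integral_sphere_ofLp (hg : Integrable g) :
    IntegrableOn (fun r : ℝ => r ^ (n - 1) •
      ∫ v, g (WithLp.ofLp (r • (v : EuclideanSpace ℝ (Fin n))))
        ∂(volume : Measure (EuclideanSpace ℝ (Fin n))).toSphere) (Ioi 0) := by
  simpa [finrank_euclideanSpace_fin] using
    ((PiLp.volume_preserving_ofLp (Fin n)).integrable_comp hg.aestronglyMeasurable |>.mpr hg
      ).integrableOn_Ioi_integral_sphere

lemma integral_fin_fun_eq_integral_Ioi_integral_sphere (hg : Integrable g) :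
    ∫ y, g y = ∫ r in Ioi (0 : ℝ), r ^ (n - 1) •
      ∫ v, g (WithLp.ofLp (r • (v : EuclideanSpace ℝ (Fin n))))
        ∂(volume : Measure (EuclideanSpace ℝ (Fin n))).toSphere := by
  have := integral_eq_integral_Ioi_integral_sphere
    ((PiLp.volume_preserving_ofLp (Fin n)).integrable_comp hg.aestronglyMeasurable |>.mpr hg)
  rw [finrank_euclideanSpace_fin] at this
  rw [← (EuclideanSpace.volume_preserving_symm_measurableEquiv_toLp (Fin n)).integral_comp']
  exact this

end EuclideanPolar

lemma integrable_of_norm_le_one_add_rpow_neg {E F : Type*} [NormedAddCommGroup E]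
    [NormedSpace ℝ E] [FiniteDimensional ℝ E] [MeasurableSpace E] [BorelSpace E]
    {μ : Measure E} [μ.IsAddHaarMeasure] [NormedAddCommGroup F] {g : E → F}
    (hg : AEStronglyMeasurable g μ) {N : E → ℝ} {c C r : ℝ} (hc : 1 ≤ c)
    (hN : ∀ x, ‖x‖ ≤ c * N x) (hr : Module.finrank ℝ E < r)
    (hbound : ∀ x, ‖g x‖ ≤ C * (1 + N x) ^ (-r)) : Integrable g μ := by
  have hr0 : 0 ≤ r := (Nat.cast_nonneg _).trans hr.le
  refine ((integrable_one_add_norm hr).const_mul (|C| * c ^ r)).mono' hg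
    (.of_forall fun x => ?_)
  have hle : 1 + ‖x‖ ≤ c * (1 + N x) := by nlinarith [hN x, norm_nonneg x]
  have hNx : 0 ≤ (1 + N x) ^ (-r) := Real.rpow_nonneg (by nlinarith [hN x, norm_nonneg x]) _
  calc ‖g x‖ ≤ |C| * (1 + N x) ^ (-r) :=
        (hbound x).trans (mul_le_mul_of_nonneg_right (le_abs_self C) hNx)
    _ ≤ |C| * (c ^ r * (1 + ‖x‖) ^ (-r)) := by
        gcongr
        exact rpow_neg_le_of_le_mul (by positivity) (by linarith) hle hr0
    _ = |C| * c ^ r * (1 + ‖x‖) ^ (-r) := by ring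

end MeasureTheory

abbrev HypChartDomain (d p q : ℕ) :=
  (Fin (d * (q - p)) → ℝ) × (Fin (d * p) → ℝ) × (Fin (d - 1) → ℝ)

noncomputable section

def hyperboloidChart (d p q : ℕ) (s : ℝ) (x : HypChartDomain d p q) : HypPoint d p q :=
  (Real.sinh s - 1 / 2 * Real.exp s * ∑ i, x.1 i ^ 2,
    fun i => Real.exp s * x.2.2 i, x.2.1, -x.2.1, -x.1,
    fun i => Real.exp s * x.2.2 i,
    Real.cosh s - 1 / 2 * Real.exp s * ∑ i, x.1 i ^ 2)

variable {d p q : ℕ}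

lemma Qform_hyperboloidChart (s : ℝ) (x : HypChartDomain d p q) :
    Qform (hyperboloidChart d p q s x) = -1 := by
  have h1 := Real.cosh_sq_sub_sinh_sq s
  have h2 : Real.exp s * Real.exp (-s) = 1 := by rw [← Real.exp_add, add_neg_cancel, Real.exp_zero]
  have h3 := Real.cosh_sub_sinh s
  simp only [Qform, hyperboloidChart, Pi.neg_apply, neg_sq]
  linear_combination (-1 : ℝ) * h1 + (Real.exp s * ∑ i, x.1 i ^ 2) * h3 + (∑ i, x.1 i ^ 2) * h2

lemma continuous_hyperboloidChart (s : ℝ) : Continuous (hyperboloidChart d p q s) := by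
  unfold hyperboloidChart
  fun_prop

lemma norm_le_mul_normE_hyperboloidChart (s : ℝ) (x : HypChartDomain d p q) :
    ‖x‖ ≤ max 1 (Real.exp (-s)) * normE (hyperboloidChart d p q s x) := by
  obtain ⟨v', u, w⟩ := x
  set N := normE (hyperboloidChart d p q s (v', u, w)) with hN_def
  have hN : 0 ≤ N := Real.sqrt_nonneg _
  have hsum {ι : Type} [Fintype ι] (y : ι → ℝ) : 0 ≤ ∑ i, y i ^ 2 :=
    Finset.sum_nonneg fun i _ => sq_nonneg (y i)
  have hle {ι : Type} [Fintype ι] (y : ι → ℝ) (hy : ∑ i, y i ^ 2 ≤ N ^ 2) : ‖y‖ ≤ N :=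
    (pi_norm_le_sqrt_sum_sq y).trans ((Real.sqrt_le_sqrt hy).trans_eq (Real.sqrt_sq hN))
  have hN2 : N ^ 2 = (Real.sinh s - 1 / 2 * Real.exp s * ∑ i, v' i ^ 2) ^ 2 +
      ∑ i, (Real.exp s * w i) ^ 2 + ∑ i, u i ^ 2 + ∑ i, u i ^ 2 + ∑ i, v' i ^ 2 +
      ∑ i, (Real.exp s * w i) ^ 2 + (Real.cosh s - 1 / 2 * Real.exp s * ∑ i, v' i ^ 2) ^ 2 := by
    simp only [hN_def, normE, hyperboloidChart, Pi.neg_apply, neg_sq]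
    exact Real.sq_sqrt (by positivity)
  have hv' : ‖v'‖ ≤ N := hle v' (by nlinarith [hsum u, hsum fun i => Real.exp s * w i])
  have hu : ‖u‖ ≤ N := hle u (by nlinarith [hsum v', hsum fun i => Real.exp s * w i])
  have hw : ‖w‖ ≤ Real.exp (-s) * N := by
    have : ‖Real.exp s • w‖ ≤ N := hle _ (by
      simp only [Pi.smul_apply, smul_eq_mul]
      nlinarith [hsum u, hsum v', hsum fun i => Real.exp s * w i])
    rw [norm_smul, Real.norm_of_nonneg (Real.exp_pos s).le] at this
    calc ‖w‖ = Real.exp (-s) * (Real.exp s * ‖w‖) := by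
          rw [← mul_assoc, ← Real.exp_add, neg_add_cancel, Real.exp_zero, one_mul]
      _ ≤ Real.exp (-s) * N := by gcongr
  have hmax : ∀ {a b : ℝ}, 0 ≤ b → a ≤ b → a ≤ max 1 (Real.exp (-s)) * b := fun hb hab =>
    hab.trans (le_mul_of_one_le_left hb (le_max_left _ _))
  refine norm_prod_le_iff.mpr ⟨hmax hN hv', norm_prod_le_iff.mpr ⟨hmax hN hu, ?_⟩⟩
  exact hw.trans (by gcongr; exact le_max_right _ _)

lemma integrable_comp_hyperboloidChart {f : HypPoint d p q → ℂ}
    (hcont : ContinuousOn f {x | Qform x < 0})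
    (hdecay : ∀ M : ℕ, ∃ CM : ℝ, ∀ x : HypPoint d p q, Qform x = -1 →
      ‖f x‖ ≤ CM * (1 + normE x) ^ (-(M : ℝ))) (s : ℝ) :
    Integrable (fun x : HypChartDomain d p q => f (hyperboloidChart d p q s x)) := by
  have : (volume : Measure ((Fin (d * p) → ℝ) × (Fin (d - 1) → ℝ))).IsAddHaarMeasure :=
    Measure.prod.instIsAddHaarMeasure _ _
  have : (volume : Measure (HypChartDomain d p q)).IsAddHaarMeasure :=
    Measure.prod.instIsAddHaarMeasure _ _
  obtain ⟨C, hC⟩ := hdecay (Module.finrank ℝ (HypChartDomain d p q) + 1)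
  refine integrable_of_norm_le_one_add_rpow_neg ?_ (le_max_left 1 (Real.exp (-s)))
    (norm_le_mul_normE_hyperboloidChart s) (by push_cast; linarith)
    (fun x => hC _ (Qform_hyperboloidChart s x))
  refine (hcont.comp_continuous (continuous_hyperboloidChart s) fun x => ?_).aestronglyMeasurable
  simp [Qform_hyperboloidChart s x]

def fiberIntegral (f : HypPoint d p q → ℂ) (s : ℝ) (y : Fin (d * (q - p)) → ℝ) : ℂ :=
  ∫ u : Fin (d * p) → ℝ, ∫ w : Fin (d - 1) → ℝ,
    f (Real.sinh s - 1 / 2 * Real.exp s * ∑ i, y i ^ 2, w, u, -u, -y, w,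
      Real.cosh s - 1 / 2 * Real.exp s * ∑ i, y i ^ 2)

lemma integral_integral_comp_hyperboloidChart (f : HypPoint d p q → ℂ) (s : ℝ)
    (y : Fin (d * (q - p)) → ℝ) :
    ∫ u, ∫ w, f (hyperboloidChart d p q s (y, u, w)) =
      (Real.exp s ^ (d - 1))⁻¹ • fiberIntegral f s y := by
  rw [fiberIntegral, ← integral_smul]
  refine integral_congr_ae (.of_forall fun u => ?_)
  dsimp only [hyperboloidChart]
  have := Measure.integral_comp_smul_of_nonneg (volume : Measure (Fin (d - 1) → ℝ))
    (fun w => f (Real.sinh s - 1 / 2 * Real.exp s * ∑ i, y i ^ 2, w, u, -u, -y, w,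
      Real.cosh s - 1 / 2 * Real.exp s * ∑ i, y i ^ 2)) (Real.exp s) (hR := (Real.exp_pos s).le)
  rwa [Module.finrank_fin_fun] at this

lemma integrable_fiberIntegral {f : HypPoint d p q → ℂ} {s : ℝ}
    (hf : Integrable (fun x : HypChartDomain d p q => f (hyperboloidChart d p q s x))) :
    Integrable (fiberIntegral f s) := by
  have := hf.integrable_integral_integral
  simp only [integral_integral_comp_hyperboloidChart] at this
  exact (integrable_fun_smul_iff (by positivity) _).mp this

def radialProfile (f : HypPoint d p q → ℂ) (s r : ℝ) : ℂ :=
  Gf f (Real.sinh s - 1 / 2 * Real.exp s * r ^ 2, -r, Real.cosh s - 1 / 2 * Real.exp s * r ^ 2)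

lemma integral_toSphere_fiberIntegral (f : HypPoint d p q → ℂ) (s r : ℝ) :
    ∫ v, fiberIntegral f s (WithLp.ofLp (r • (v : EuclideanSpace ℝ (Fin (d * (q - p))))))
      ∂(volume : Measure (EuclideanSpace ℝ (Fin (d * (q - p))))).toSphere =
      radialProfile f s r := by
  refine integral_congr_ae (.of_forall fun v => ?_)
  have hv : ∑ i, (v : EuclideanSpace ℝ (Fin (d * (q - p)))) i ^ 2 = 1 := by
    have := EuclideanSpace.norm_eq (v : EuclideanSpace ℝ (Fin (d * (q - p))))
    rw [norm_eq_of_mem_sphere v, eq_comm, Real.sqrt_eq_one] at this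
    simpa using this
  have hsq : ∑ i, (r * (v : EuclideanSpace ℝ (Fin (d * (q - p)))) i) ^ 2 = r ^ 2 := by
    simp_rw [mul_pow, ← Finset.mul_sum, hv, mul_one]
  have hneg : -(r • WithLp.ofLp (v : EuclideanSpace ℝ (Fin (d * (q - p))))) =
      fun i => -r * (v : EuclideanSpace ℝ (Fin (d * (q - p)))) i := by
    ext i
    simp
  simp only [fiberIntegral, WithLp.ofLp_smul, Pi.smul_apply, smul_eq_mul, hsq, hneg]

end

noncomputable section

variable {d p q : ℕ} [NeZero (d * (q - p))]

def radonIntegrand (f : HypPoint d p q → ℂ) (s v : ℝ) : ℂ :=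
  Gf f (-v, -Real.sqrt (1 + 2 * Real.exp (-s) * v - Real.exp (-s) ^ 2), Real.exp (-s) - v) *
    (((1 + 2 * Real.exp (-s) * v - Real.exp (-s) ^ 2) ^
      (((d * (q - p) : ℕ) : ℝ) / 2 - 1) : ℝ) : ℂ)

lemma smul_radonIntegrand_quadratic (f : HypPoint d p q → ℂ) (s : ℝ)
    {r : ℝ} (hr : 0 < r) :
    (2 * (1 / 2 * Real.exp s) * r) • radonIntegrand f s (1 / 2 * Real.exp s * r ^ 2 + -Real.sinh s)
      = Real.exp s • (r ^ (d * (q - p) - 1) • radialProfile f s r) := by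
  have hexp : Real.exp (-s) * Real.exp s = 1 := by
    rw [← Real.exp_add, neg_add_cancel, Real.exp_zero]
  have hkey : 1 + 2 * Real.exp (-s) * (1 / 2 * Real.exp s * r ^ 2 + -Real.sinh s) -
      Real.exp (-s) ^ 2 = r ^ 2 := by
    linear_combination (r ^ 2 - 1) * hexp - 2 * Real.exp (-s) * Real.sinh_eq s
  have hcosh : Real.exp (-s) - (1 / 2 * Real.exp s * r ^ 2 + -Real.sinh s) =
      Real.cosh s - 1 / 2 * Real.exp s * r ^ 2 := by
    linear_combination -(Real.cosh_sub_sinh s)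
  have hweight : ((2 * (1 / 2 * Real.exp s) * r : ℝ) : ℂ) *
      (((r ^ 2) ^ (((d * (q - p) : ℕ) : ℝ) / 2 - 1) : ℝ) : ℂ) =
      (Real.exp s : ℂ) * ((r ^ (d * (q - p) - 1) : ℝ) : ℂ) := by
    rw [← Complex.ofReal_mul, ← Complex.ofReal_mul,
      ← sq_rpow_half_sub_one_mul_self hr (NeZero.pos _)]
    ring_nf
  rw [radonIntegrand, radialProfile, hkey, Real.sqrt_sq hr.le, hcosh, neg_add, neg_neg,
    ← sub_eq_neg_add, Complex.real_smul, Complex.real_smul, Complex.real_smul]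
  linear_combination (Gf f (Real.sinh s - 1 / 2 * Real.exp s * r ^ 2, -r,
    Real.cosh s - 1 / 2 * Real.exp s * r ^ 2)) * hweight

lemma integral_Ioi_radonIntegrand (f : HypPoint d p q → ℂ) (s : ℝ) :
    ∫ v in Ioi (-Real.sinh s), radonIntegrand f s v =
      Real.exp s • ∫ r in Ioi 0, r ^ (d * (q - p) - 1) • radialProfile f s r := by
  rw [← integral_Ioi_comp_quadratic (a := 1 / 2 * Real.exp s) (by positivity), ← integral_smul]
  exact setIntegral_congr_fun measurableSet_Ioi fun r hr =>
    smul_radonIntegrand_quadratic f s hr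

lemma integrableOn_Ioi_radonIntegrand {f : HypPoint d p q → ℂ} {s : ℝ}
    (hf : IntegrableOn (fun r => r ^ (d * (q - p) - 1) • radialProfile f s r) (Ioi 0)) :
    IntegrableOn (radonIntegrand f s) (Ioi (-Real.sinh s)) := by
  rw [← integrableOn_Ioi_comp_quadratic_iff (a := 1 / 2 * Real.exp s) (by positivity)]
  exact IntegrableOn.congr_fun (hf.smul (Real.exp s))
    (fun r hr => (smul_radonIntegrand_quadratic f s hr).symm) measurableSet_Ioi

lemma integrableOn_Ioi_radialProfile {f : HypPoint d p q → ℂ} {s : ℝ}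
    (hf : Integrable (fiberIntegral f s)) :
    IntegrableOn (fun r => r ^ (d * (q - p) - 1) • radialProfile f s r) (Ioi 0) := by
  simpa only [integral_toSphere_fiberIntegral] using hf.integrableOn_Ioi_integral_sphere_ofLp

lemma integral_fiberIntegral {f : HypPoint d p q → ℂ} {s : ℝ}
    (hf : Integrable (fiberIntegral f s)) :
    ∫ y, fiberIntegral f s y = ∫ r in Ioi 0, r ^ (d * (q - p) - 1) • radialProfile f s r := by
  simpa only [integral_toSphere_fiberIntegral] using
    integral_fin_fun_eq_integral_Ioi_integral_sphere hf

end

theorem radon_change_of_variables_general (d p q : ℕ) (hd : d = 1 ∨ d = 2 ∨ d = 4) (hpq : p < q)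
    (f : HypPoint d p q → ℂ)
    (hcont : ContinuousOn f {x | Qform x < 0})
    (hdecay : ∀ M : ℕ, ∃ CM : ℝ, ∀ x : HypPoint d p q, Qform x = -1 →
      ‖f x‖ ≤ CM * (1 + normE x) ^ (-(M : ℝ))) :
    ∀ s : ℝ,
      Integrable (fun x : (Fin (d * (q - p)) → ℝ) × (Fin (d * p) → ℝ) × (Fin (d - 1) → ℝ) =>
        f (Real.sinh s - 1 / 2 * Real.exp s * ∑ i, x.1 i ^ 2,
          fun i => Real.exp s * x.2.2 i, x.2.1, -x.2.1, -x.1,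
          fun i => Real.exp s * x.2.2 i,
          Real.cosh s - 1 / 2 * Real.exp s * ∑ i, x.1 i ^ 2)) ∧
      IntegrableOn (fun v : ℝ =>
        Gf f (-v, -Real.sqrt (1 + 2 * Real.exp (-s) * v - Real.exp (-s) ^ 2),
            Real.exp (-s) - v) *
          (((1 + 2 * Real.exp (-s) * v - Real.exp (-s) ^ 2) ^
            (((d * (q - p) : ℕ) : ℝ) / 2 - 1) : ℝ) : ℂ))
        (Set.Ioi (-Real.sinh s)) ∧
      (∫ v' : Fin (d * (q - p)) → ℝ, ∫ u : Fin (d * p) → ℝ, ∫ w : Fin (d - 1) → ℝ,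
          f (Real.sinh s - 1 / 2 * Real.exp s * ∑ i, v' i ^ 2,
            fun i => Real.exp s * w i, u, -u, -v',
            fun i => Real.exp s * w i,
            Real.cosh s - 1 / 2 * Real.exp s * ∑ i, v' i ^ 2)) =
        ((Real.exp (-(d : ℝ) * s) : ℝ) : ℂ) *
          ∫ v in Set.Ioi (-Real.sinh s),
            Gf f (-v, -Real.sqrt (1 + 2 * Real.exp (-s) * v - Real.exp (-s) ^ 2),
                Real.exp (-s) - v) *
              (((1 + 2 * Real.exp (-s) * v - Real.exp (-s) ^ 2) ^
                (((d * (q - p) : ℕ) : ℝ) / 2 - 1) : ℝ) : ℂ) := by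
  intro s
  have hd1 : 1 ≤ d := by rcases hd with h | h | h <;> omega
  have : NeZero (d * (q - p)) := ⟨Nat.mul_ne_zero (by omega) (by omega)⟩
  have hF := integrable_comp_hyperboloidChart hcont hdecay s
  have hH := integrable_fiberIntegral hF
  refine ⟨hF, integrableOn_Ioi_radonIntegrand (integrableOn_Ioi_radialProfile hH), ?_⟩
  have hscale : (Real.exp s ^ (d - 1))⁻¹ = Real.exp (-(d : ℝ) * s) * Real.exp s := by
    rw [← Real.exp_nat_mul, ← Real.exp_neg, ← Real.exp_add, Nat.cast_sub hd1]
    ring_nf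
  calc _ = ∫ y, (Real.exp s ^ (d - 1))⁻¹ • fiberIntegral f s y :=
        integral_congr_ae (.of_forall (integral_integral_comp_hyperboloidChart f s))
    _ = (Real.exp s ^ (d - 1))⁻¹ • ∫ r in Ioi 0, r ^ (d * (q - p) - 1) • radialProfile f s r := by
        rw [integral_smul, integral_fiberIntegral hH]
    _ = ((Real.exp (-(d : ℝ) * s) : ℝ) : ℂ) * ∫ v in Ioi (-Real.sinh s), radonIntegrand f s v := by
        rw [integral_Ioi_radonIntegrand, hscale, mul_smul, Complex.real_smul]

/-- If `f` is continuous on the cone `C = {Q < 0}`, homogeneous of degree zero, and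
rapidly decreasing on the hyperboloid `{Q = -1}`, then for every `s ∈ ℝ`, writing
`z = e^{-s}`, the change-of-variables identity
`∫∫∫ f(sinh s - ½eˢ|v'|², eˢw, u, -u, -v', eˢw, cosh s - ½eˢ|v'|²) dw du dv'
  = e^{-ds} ∫_{-sinh s}^∞ G_f(-v, -(1+2zv-z²)^{1/2}, z-v) (1+2zv-z²)^{d(q-p)/2-1} dv`
holds, both sides being absolutely convergent. -/
theorem radon_change_of_variables (d p q : ℕ) (hd : d = 1 ∨ d = 2 ∨ d = 4) (hpq : p < q)
    (f : HypPoint d p q → ℂ)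
    (hcont : ContinuousOn f {x | Qform x < 0})
    (hhom : ∀ (lam : ℝ), lam ≠ 0 → ∀ x : HypPoint d p q, Qform x < 0 → f (lam • x) = f x)
    (hdecay : ∀ M : ℕ, ∃ CM : ℝ, ∀ x : HypPoint d p q, Qform x = -1 →
      ‖f x‖ ≤ CM * (1 + normE x) ^ (-(M : ℝ))) :
    ∀ s : ℝ,
      Integrable (fun x : (Fin (d * (q - p)) → ℝ) × (Fin (d * p) → ℝ) × (Fin (d - 1) → ℝ) =>
        f (Real.sinh s - 1 / 2 * Real.exp s * ∑ i, x.1 i ^ 2,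
          fun i => Real.exp s * x.2.2 i, x.2.1, -x.2.1, -x.1,
          fun i => Real.exp s * x.2.2 i,
          Real.cosh s - 1 / 2 * Real.exp s * ∑ i, x.1 i ^ 2)) ∧
      IntegrableOn (fun v : ℝ =>
        Gf f (-v, -Real.sqrt (1 + 2 * Real.exp (-s) * v - Real.exp (-s) ^ 2),
            Real.exp (-s) - v) *
          (((1 + 2 * Real.exp (-s) * v - Real.exp (-s) ^ 2) ^
            (((d * (q - p) : ℕ) : ℝ) / 2 - 1) : ℝ) : ℂ))
        (Set.Ioi (-Real.sinh s)) ∧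
      (∫ v' : Fin (d * (q - p)) → ℝ, ∫ u : Fin (d * p) → ℝ, ∫ w : Fin (d - 1) → ℝ,
          f (Real.sinh s - 1 / 2 * Real.exp s * ∑ i, v' i ^ 2,
            fun i => Real.exp s * w i, u, -u, -v',
            fun i => Real.exp s * w i,
            Real.cosh s - 1 / 2 * Real.exp s * ∑ i, v' i ^ 2)) =
        ((Real.exp (-(d : ℝ) * s) : ℝ) : ℂ) *
          ∫ v in Set.Ioi (-Real.sinh s),
            Gf f (-v, -Real.sqrt (1 + 2 * Real.exp (-s) * v - Real.exp (-s) ^ 2),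
                Real.exp (-s) - v) *
              (((1 + 2 * Real.exp (-s) * v - Real.exp (-s) ^ 2) ^
                (((d * (q - p) : ℕ) : ℝ) / 2 - 1) : ℝ) : ℂ) :=
  radon_change_of_variables_general d p q hd hpq f hcont hdecay
end
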